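/- The dual objective H(p,q) = (1/2)(‖d − β𝓛(p,q)‖² − ‖H_C(d − β𝓛(p,q))‖²) + β[Tr(pᵀE₁) + Tr(qᵀE₂)] has gradient ∇H(p,q) = −β𝓛ᵀ(P_C(d − β𝓛(p,q))) + β(E₁, E₂), and this gradient is Lipschitz continuous with constant at most 8β². -/

import Mathlib

/-!
Write `u = d - β𝓛(p,q)`. Then `H(x) = Ψ(u) + β⟪E, x⟫` with `Ψ(u) = ∑ φ(u_k)` and
`φ(s) = ½(s² - (s - P_C s)²)`. Checking the three pieces of `P_C` shows
`|φ(t) - φ(s) - P_C(s)(t - s)| ≤ ½(t - s)²`, so `∇Ψ = P_C` entrywise, and `P_C` is 1-Lipschitz.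
The chain rule for the affine map `x ↦ d - β𝓛x` gives `∇H = -β𝓛*(P_C u) + βE`. Summation by
parts shows that the adjoint `𝓛*` is the forward-difference operator `𝓛ᵀ`. Hence `∇H` is
`β²‖𝓛‖²`-Lipschitz. Finally `‖𝓛‖² ≤ 8`: every entry of `𝓛(p,q)` is a sum of two backward
differences, and `(a + b)² ≤ 2(a² + b²)` is applied twice.
-/

noncomputable section

/-- Extension of `p ∈ ℝ^{(h-1)×w}` by zero outside its index range. -/
def pE (h w : ℕ) (p : Fin (h - 1) → Fin w → ℝ) (i j : ℕ) : ℝ :=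
  if hij : i < h - 1 ∧ j < w then p ⟨i, hij.1⟩ ⟨j, hij.2⟩ else 0

/-- Extension of `q ∈ ℝ^{h×(w-1)}` by zero outside its index range. -/
def qE (h w : ℕ) (q : Fin h → Fin (w - 1) → ℝ) (i j : ℕ) : ℝ :=
  if hij : i < h ∧ j < w - 1 then q ⟨i, hij.1⟩ ⟨j, hij.2⟩ else 0

/-- The operator `𝓛(p,q)_{i,j} = p_{i-1,j} + q_{i,j-1} - p_{i,j} - q_{i,j}`
with the zero boundary conventions. -/
def Lop (h w : ℕ) (p : Fin (h - 1) → Fin w → ℝ) (q : Fin h → Fin (w - 1) → ℝ) :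
    Fin h → Fin w → ℝ := fun i j =>
  (if i.1 = 0 then 0 else pE h w p (i.1 - 1) j.1) +
    (if j.1 = 0 then 0 else qE h w q i.1 (j.1 - 1)) -
      pE h w p i.1 j.1 - qE h w q i.1 j.1

/-- First component of `𝓛ᵀ L`: vertical forward differences. -/
def LtP (h w : ℕ) (L : Fin h → Fin w → ℝ) : Fin (h - 1) → Fin w → ℝ :=
  fun i j => L ⟨i.1 + 1, by omega⟩ j - L ⟨i.1, by omega⟩ j

/-- Second component of `𝓛ᵀ L`: horizontal forward differences. -/
def LtQ (h w : ℕ) (L : Fin h → Fin w → ℝ) : Fin h → Fin (w - 1) → ℝ :=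
  fun i j => L i ⟨j.1 + 1, by omega⟩ - L i ⟨j.1, by omega⟩


/-- Entrywise clamping to `[0,1]`: the projection onto `C = {0 ≤ L ≤ 1}`. -/
def clampC (h w : ℕ) (L : Fin h → Fin w → ℝ) : Fin h → Fin w → ℝ :=
  fun i j => min 1 (max 0 (L i j))

variable (h w : ℕ)

/-- The dual variable space: pairs `(p, q)` flattened into one Euclidean space. -/
abbrev DualSpace := EuclideanSpace ℝ ((Fin (h - 1) × Fin w) ⊕ (Fin h × Fin (w - 1)))

/-- The `p`-component of a flattened dual variable. -/
def pOf (x : DualSpace h w) : Fin (h - 1) → Fin w → ℝ := fun i j => x (Sum.inl (i, j))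

/-- The `q`-component of a flattened dual variable. -/
def qOf (x : DualSpace h w) : Fin h → Fin (w - 1) → ℝ := fun i j => x (Sum.inr (i, j))

/-- The dual objective
`H(p,q) = ½(‖d - β𝓛(p,q)‖² - ‖H_C(d - β𝓛(p,q))‖²) + β[Tr(pᵀE₁) + Tr(qᵀE₂)]`. -/
def dualObj (d : Fin h → Fin w → ℝ) (β : ℝ)
    (E1 : Fin (h - 1) → Fin w → ℝ) (E2 : Fin h → Fin (w - 1) → ℝ)
    (x : DualSpace h w) : ℝ :=
  (1 / 2) * ((∑ i, ∑ j, (d i j - β * Lop h w (pOf h w x) (qOf h w x) i j) ^ 2) -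
      ∑ i, ∑ j, ((d i j - β * Lop h w (pOf h w x) (qOf h w x) i j) -
        clampC h w (fun i j => d i j - β * Lop h w (pOf h w x) (qOf h w x) i j) i j) ^ 2) +
    β * ((∑ i, ∑ j, pOf h w x i j * E1 i j) + ∑ i, ∑ j, qOf h w x i j * E2 i j)

/-- The claimed gradient `∇H(p,q) = -β 𝓛ᵀ(P_C(d - β𝓛(p,q))) + β(E₁, E₂)`. -/
def dualGrad (d : Fin h → Fin w → ℝ) (β : ℝ)
    (E1 : Fin (h - 1) → Fin w → ℝ) (E2 : Fin h → Fin (w - 1) → ℝ)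
    (x : DualSpace h w) : DualSpace h w :=
  (WithLp.equiv 2 _).symm fun s =>
    match s with
    | Sum.inl (i, j) =>
        -β * LtP h w (clampC h w
          (fun i j => d i j - β * Lop h w (pOf h w x) (qOf h w x) i j)) i j + β * E1 i j
    | Sum.inr (i, j) =>
        -β * LtQ h w (clampC h w
          (fun i j => d i j - β * Lop h w (pOf h w x) (qOf h w x) i j)) i j + β * E2 i j

open Finset
open scoped InnerProductSpace NNReal

section GradientCalculus

variable {E F : Type*} [NormedAddCommGroup E] [InnerProductSpace ℝ E] [CompleteSpace E]
  [NormedAddCommGroup F] [InnerProductSpace ℝ F] [CompleteSpace F]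

theorem hasGradientAt_of_abs_sub_sub_inner_le {f : E → ℝ} {g x : E} {C : ℝ}
    (hf : ∀ y, |f y - f x - ⟪g, y - x⟫_ℝ| ≤ C * ‖y - x‖ ^ 2) : HasGradientAt f g x := by
  rw [hasGradientAt_iff_isLittleO]
  refine Asymptotics.IsBigO.trans_isLittleO ?_ (Asymptotics.isLittleO_pow_sub_sub x one_lt_two)
  refine Asymptotics.IsBigO.of_bound C (Filter.Eventually.of_forall fun y => ?_)
  simpa only [Real.norm_eq_abs, abs_pow, abs_norm] using hf y

theorem HasGradientAt.comp_affine_add_inner {Ψ : F → ℝ} {g : F} (u₀ : F) (A : E →L[ℝ] F)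
    (e x : E) (hΨ : HasGradientAt Ψ g (u₀ + A x)) :
    HasGradientAt (fun x => Ψ (u₀ + A x) + ⟪e, x⟫_ℝ) (A.adjoint g + e) x := by
  rw [hasGradientAt_iff_hasFDerivAt] at hΨ ⊢
  refine ((hΨ.comp x (A.hasFDerivAt.const_add u₀)).add
    ((innerSL ℝ e).hasFDerivAt (x := x))).congr_fderiv ?_
  ext z
  simp [ContinuousLinearMap.adjoint_inner_left]

theorem LipschitzWith.norm_adjoint_comp_affine_sub_le {G : F → F} {K : ℝ≥0}
    (hG : LipschitzWith K G) (u₀ : F) (A : E →L[ℝ] F) (e x y : E) :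
    ‖(A.adjoint (G (u₀ + A x)) + e) - (A.adjoint (G (u₀ + A y)) + e)‖ ≤
      K * ‖A‖ ^ 2 * ‖x - y‖ :=
  calc ‖(A.adjoint (G (u₀ + A x)) + e) - (A.adjoint (G (u₀ + A y)) + e)‖
      = ‖A.adjoint (G (u₀ + A x) - G (u₀ + A y))‖ := by
        rw [map_sub, add_sub_add_right_eq_sub]
    _ ≤ ‖A‖ * ‖G (u₀ + A x) - G (u₀ + A y)‖ := by
        simpa only [LinearIsometryEquiv.norm_map] using
          A.adjoint.le_opNorm (G (u₀ + A x) - G (u₀ + A y))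
    _ ≤ ‖A‖ * (K * ‖A (x - y)‖) := by
        gcongr
        simpa only [map_sub, add_sub_add_left_eq_sub] using hG.norm_sub_le (u₀ + A x) (u₀ + A y)
    _ ≤ ‖A‖ * (K * (‖A‖ * ‖x - y‖)) := by gcongr; exact A.le_opNorm _
    _ = K * ‖A‖ ^ 2 * ‖x - y‖ := by ring

end GradientCalculus

section Clamp

def clampPrimitive (s : ℝ) : ℝ := 1 / 2 * (s ^ 2 - (s - min 1 (max 0 s)) ^ 2)

theorem abs_clampPrimitive_sub_sub_le (s t : ℝ) :
    |clampPrimitive t - clampPrimitive s - min 1 (max 0 s) * (t - s)| ≤ 1 / 2 * (t - s) ^ 2 := by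
  rw [abs_le]
  constructor <;> (simp only [clampPrimitive, min_def, max_def]; split_ifs <;> nlinarith)

theorem abs_clamp_sub_clamp_le (s t : ℝ) : |min 1 (max 0 s) - min 1 (max 0 t)| ≤ |s - t| :=
  (abs_min_sub_min_le_max _ _ _ _).trans (by simpa [max_comm] using abs_max_sub_max_le_abs s t 0)

variable {ι : Type*} [Fintype ι]

def clampVec (u : EuclideanSpace ℝ ι) : EuclideanSpace ℝ ι :=
  WithLp.toLp 2 fun k => min 1 (max 0 (u k))

def clampPotential (u : EuclideanSpace ℝ ι) : ℝ := ∑ k, clampPrimitive (u k)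

theorem hasGradientAt_clampPotential (u : EuclideanSpace ℝ ι) :
    HasGradientAt (clampPotential (ι := ι)) (clampVec u) u := by
  refine hasGradientAt_of_abs_sub_sub_inner_le (C := 1 / 2) fun v => ?_
  have hsum : clampPotential v - clampPotential u - ⟪clampVec u, v - u⟫_ℝ =
      ∑ k, (clampPrimitive (v k) - clampPrimitive (u k) - min 1 (max 0 (u k)) * (v k - u k)) := by
    simp [clampPotential, clampVec, PiLp.inner_apply, sum_sub_distrib, mul_comm]
  rw [hsum, EuclideanSpace.real_norm_sq_eq, mul_sum]
  exact (abs_sum_le_sum_abs _ _).trans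
    (sum_le_sum fun k _ => abs_clampPrimitive_sub_sub_le (u k) (v k))

theorem lipschitzWith_one_clampVec : LipschitzWith 1 (clampVec (ι := ι)) := by
  refine LipschitzWith.of_dist_le_mul fun u v => ?_
  simp only [NNReal.coe_one, one_mul, EuclideanSpace.dist_eq]
  gcongr with k
  exact abs_clamp_sub_clamp_le _ _

end Clamp

section Differences

def bdiff (e : ℕ → ℝ) (i : ℕ) : ℝ := (if i = 0 then 0 else e (i - 1)) - e i

theorem sum_range_mul_bdiff (n : ℕ) (a e : ℕ → ℝ) (he : e (n - 1) = 0) :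
    ∑ i ∈ range n, a i * bdiff e i = ∑ i ∈ range (n - 1), (a (i + 1) - a i) * e i := by
  cases n with
  | zero => simp
  | succ n =>
    rw [Nat.add_sub_cancel] at he ⊢
    simp only [bdiff, mul_sub, sum_sub_distrib, sub_mul]
    rw [sum_range_succ', sum_range_succ (fun i => a i * e i)]
    simp [he]

theorem sum_range_bdiff_sq_le (n : ℕ) (e : ℕ → ℝ) (he : e (n - 1) = 0) :
    ∑ i ∈ range n, bdiff e i ^ 2 ≤ 4 * ∑ i ∈ range (n - 1), e i ^ 2 := by
  cases n with
  | zero => simp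
  | succ n =>
    rw [Nat.add_sub_cancel] at he ⊢
    have hshift : ∑ i ∈ range (n + 1), (if i = 0 then 0 else e (i - 1)) ^ 2 =
        ∑ i ∈ range n, e i ^ 2 := by
      rw [sum_range_succ']
      simp
    have hlast : ∑ i ∈ range (n + 1), e i ^ 2 = ∑ i ∈ range n, e i ^ 2 := by
      rw [sum_range_succ, he, zero_pow two_ne_zero, add_zero]
    calc ∑ i ∈ range (n + 1), bdiff e i ^ 2
        ≤ ∑ i ∈ range (n + 1), 2 * ((if i = 0 then 0 else e (i - 1)) ^ 2 + e i ^ 2) :=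
          sum_le_sum fun i _ => by simpa [bdiff, sub_eq_add_neg] using add_sq_le (a := if i = 0 then 0 else e (i - 1)) (b := -e i)
      _ = 4 * ∑ i ∈ range n, e i ^ 2 := by
          rw [← mul_sum, sum_add_distrib, hshift, hlast]
          ring

def extendZero (n m : ℕ) (L : Fin n → Fin m → ℝ) (i j : ℕ) : ℝ :=
  if hij : i < n ∧ j < m then L ⟨i, hij.1⟩ ⟨j, hij.2⟩ else 0

theorem extendZero_of_lt {n m : ℕ} (L : Fin n → Fin m → ℝ) {i j : ℕ} (hi : i < n)
    (hj : j < m) : extendZero n m L i j = L ⟨i, hi⟩ ⟨j, hj⟩ :=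
  dif_pos ⟨hi, hj⟩

theorem sum_fin_prod_eq_sum_range {n m : ℕ} {f : Fin n × Fin m → ℝ} {g : ℕ → ℕ → ℝ}
    (hfg : ∀ a b, f (a, b) = g a b) : ∑ k, f k = ∑ i ∈ range n, ∑ j ∈ range m, g i j := by
  rw [Fintype.sum_prod_type, ← Fin.sum_univ_eq_sum_range (fun i => ∑ j ∈ range m, g i j)]
  refine Fintype.sum_congr _ _ fun a => ?_
  rw [← Fin.sum_univ_eq_sum_range]
  exact Fintype.sum_congr _ _ fun b => hfg a b

end Differences

section DivergenceOperator

theorem Lop_eq_bdiff_add_bdiff (p : Fin (h - 1) → Fin w → ℝ) (q : Fin h → Fin (w - 1) → ℝ)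
    (i : Fin h) (j : Fin w) :
    Lop h w p q i j = bdiff (fun k => pE h w p k j) i + bdiff (qE h w q i) j := by
  simp only [Lop, bdiff]
  ring

theorem LtP_eq_extendZero_sub (L : Fin h → Fin w → ℝ) (a : Fin (h - 1)) (b : Fin w) :
    LtP h w L a b = extendZero h w L (a + 1) b - extendZero h w L a b := by
  rw [extendZero_of_lt _ (by omega) b.isLt, extendZero_of_lt _ (by omega) b.isLt]
  rfl

theorem LtQ_eq_extendZero_sub (L : Fin h → Fin w → ℝ) (a : Fin h) (b : Fin (w - 1)) :
    LtQ h w L a b = extendZero h w L a (b + 1) - extendZero h w L a b := by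
  rw [extendZero_of_lt _ a.isLt (by omega), extendZero_of_lt _ a.isLt (by omega)]
  rfl

def lopCLM : DualSpace h w →L[ℝ] EuclideanSpace ℝ (Fin h × Fin w) :=
  LinearMap.toContinuousLinearMap
    { toFun := fun x => WithLp.toLp 2 fun k => Lop h w (pOf h w x) (qOf h w x) k.1 k.2
      map_add' := fun x y => by
        ext k
        simp only [Lop, pE, qE, pOf, qOf, PiLp.add_apply]
        split_ifs <;> ring
      map_smul' := fun c x => by
        ext k
        simp only [Lop, pE, qE, pOf, qOf, PiLp.smul_apply, smul_eq_mul, RingHom.id_apply]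
        split_ifs <;> ring }

def ltCLM : EuclideanSpace ℝ (Fin h × Fin w) →L[ℝ] DualSpace h w :=
  LinearMap.toContinuousLinearMap
    { toFun := fun M => WithLp.toLp 2 <| Sum.elim
        (fun k => LtP h w (fun i j => M (i, j)) k.1 k.2)
        (fun k => LtQ h w (fun i j => M (i, j)) k.1 k.2)
      map_add' := fun M N => by
        ext (k | k) <;> simp only [LtP, LtQ, PiLp.add_apply, Sum.elim_inl, Sum.elim_inr] <;> ring
      map_smul' := fun c M => by
        ext (k | k) <;>
          simp only [LtP, LtQ, PiLp.smul_apply, smul_eq_mul, RingHom.id_apply, Sum.elim_inl,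
            Sum.elim_inr] <;> ring }

theorem inner_lopCLM_apply (x : DualSpace h w) (M : EuclideanSpace ℝ (Fin h × Fin w)) :
    ⟪lopCLM h w x, M⟫_ℝ = ⟪x, ltCLM h w M⟫_ℝ := by
  set P := pE h w (pOf h w x)
  set Q := qE h w (qOf h w x)
  set N := extendZero h w fun i j => M (i, j)
  have lhs : ⟪lopCLM h w x, M⟫_ℝ = ∑ i ∈ range h, ∑ j ∈ range w,
      (N i j * bdiff (fun k => P k j) i + N i j * bdiff (Q i) j) := by
    rw [PiLp.inner_apply]
    refine sum_fin_prod_eq_sum_range fun a b => ?_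
    simp [lopCLM, N, P, Q, Lop_eq_bdiff_add_bdiff, extendZero_of_lt, mul_add]
  have rhs : ⟪x, ltCLM h w M⟫_ℝ =
      ∑ i ∈ range (h - 1), ∑ j ∈ range w, (N (i + 1) j - N i j) * P i j +
        ∑ i ∈ range h, ∑ j ∈ range (w - 1), (N i (j + 1) - N i j) * Q i j := by
    rw [PiLp.inner_apply, Fintype.sum_sum_type]
    congr 1 <;> refine sum_fin_prod_eq_sum_range fun a b => ?_
    · simp [ltCLM, N, P, LtP_eq_extendZero_sub, pE, pOf]
    · simp [ltCLM, N, Q, LtQ_eq_extendZero_sub, qE, qOf]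
  rw [lhs, rhs]
  simp only [sum_add_distrib]
  congr 1
  · rw [sum_comm, sum_comm (s := range (h - 1))]
    exact sum_congr rfl fun j _ => sum_range_mul_bdiff _ _ _ (by simp [P, pE])
  · exact sum_congr rfl fun i _ => sum_range_mul_bdiff _ _ _ (by simp [Q, qE])

theorem adjoint_lopCLM : (lopCLM h w).adjoint = ltCLM h w :=
  ((ContinuousLinearMap.eq_adjoint_iff _ _).2 fun M x => by
    rw [real_inner_comm, ← inner_lopCLM_apply, real_inner_comm]).symm

theorem norm_sq_dualSpace (x : DualSpace h w) :
    ‖x‖ ^ 2 = ∑ i ∈ range (h - 1), ∑ j ∈ range w, pE h w (pOf h w x) i j ^ 2 +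
      ∑ i ∈ range h, ∑ j ∈ range (w - 1), qE h w (qOf h w x) i j ^ 2 := by
  rw [EuclideanSpace.real_norm_sq_eq, Fintype.sum_sum_type]
  congr 1 <;> refine sum_fin_prod_eq_sum_range fun a b => ?_
  · simp [pE, pOf]
  · simp [qE, qOf]

theorem norm_lopCLM_apply_sq_le (x : DualSpace h w) : ‖lopCLM h w x‖ ^ 2 ≤ 8 * ‖x‖ ^ 2 := by
  set P := pE h w (pOf h w x)
  set Q := qE h w (qOf h w x)
  have hL : ‖lopCLM h w x‖ ^ 2 = ∑ i ∈ range h, ∑ j ∈ range w,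
      (bdiff (fun k => P k j) i + bdiff (Q i) j) ^ 2 := by
    rw [EuclideanSpace.real_norm_sq_eq]
    exact sum_fin_prod_eq_sum_range fun a b => by simp [lopCLM, P, Q, Lop_eq_bdiff_add_bdiff]
  have hP : ∑ i ∈ range h, ∑ j ∈ range w, bdiff (fun k => P k j) i ^ 2 ≤
      4 * ∑ i ∈ range (h - 1), ∑ j ∈ range w, P i j ^ 2 := by
    rw [sum_comm, sum_comm (s := range (h - 1)), mul_sum]
    exact sum_le_sum fun j _ => sum_range_bdiff_sq_le _ _ (by simp [P, pE])
  have hQ : ∑ i ∈ range h, ∑ j ∈ range w, bdiff (Q i) j ^ 2 ≤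
      4 * ∑ i ∈ range h, ∑ j ∈ range (w - 1), Q i j ^ 2 := by
    rw [mul_sum]
    exact sum_le_sum fun i _ => sum_range_bdiff_sq_le _ _ (by simp [Q, qE])
  calc ‖lopCLM h w x‖ ^ 2
      ≤ ∑ i ∈ range h, ∑ j ∈ range w,
          2 * (bdiff (fun k => P k j) i ^ 2 + bdiff (Q i) j ^ 2) := by
        rw [hL]
        exact sum_le_sum fun i _ => sum_le_sum fun j _ => add_sq_le
    _ ≤ 8 * ‖x‖ ^ 2 := by
        simp only [← mul_sum, sum_add_distrib]
        rw [norm_sq_dualSpace]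
        linarith

theorem norm_lopCLM_sq_le : ‖lopCLM h w‖ ^ 2 ≤ 8 := by
  have hle : ‖lopCLM h w‖ ≤ √8 := by
    refine (lopCLM h w).opNorm_le_bound (Real.sqrt_nonneg 8) fun x => ?_
    rw [← Real.sqrt_sq (norm_nonneg (lopCLM h w x)), ← Real.sqrt_sq (norm_nonneg x),
      ← Real.sqrt_mul (by norm_num)]
    exact Real.sqrt_le_sqrt (norm_lopCLM_apply_sq_le h w x)
  calc ‖lopCLM h w‖ ^ 2 ≤ √8 ^ 2 := by gcongr
    _ = 8 := Real.sq_sqrt (by norm_num)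

end DivergenceOperator

def gridVec (L : Fin h → Fin w → ℝ) : EuclideanSpace ℝ (Fin h × Fin w) :=
  WithLp.toLp 2 fun k => L k.1 k.2

def dualVec (p : Fin (h - 1) → Fin w → ℝ) (q : Fin h → Fin (w - 1) → ℝ) : DualSpace h w :=
  WithLp.toLp 2 (Sum.elim (fun k => p k.1 k.2) (fun k => q k.1 k.2))

theorem gridVec_add_smul_lopCLM (d : Fin h → Fin w → ℝ) (β : ℝ) (x : DualSpace h w) :
    gridVec h w d + ((-β) • lopCLM h w) x =
      gridVec h w fun i j => d i j - β * Lop h w (pOf h w x) (qOf h w x) i j := by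
  ext k
  simp only [gridVec, lopCLM, PiLp.add_apply, smul_apply,
    LinearMap.coe_toContinuousLinearMap', LinearMap.coe_mk, AddHom.coe_mk, PiLp.smul_apply,
    smul_eq_mul]
  ring

theorem clampVec_gridVec (L : Fin h → Fin w → ℝ) :
    clampVec (gridVec h w L) = gridVec h w (clampC h w L) :=
  rfl

theorem ltCLM_gridVec (L : Fin h → Fin w → ℝ) :
    ltCLM h w (gridVec h w L) = dualVec h w (LtP h w L) (LtQ h w L) :=
  rfl

theorem adjoint_smul_lopCLM (β : ℝ) : ((-β) • lopCLM h w).adjoint = (-β) • ltCLM h w := by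
  rw [map_smulₛₗ, adjoint_lopCLM, starRingEnd_apply, star_trivial]

theorem dualObj_eq (d : Fin h → Fin w → ℝ) (β : ℝ)
    (E1 : Fin (h - 1) → Fin w → ℝ) (E2 : Fin h → Fin (w - 1) → ℝ) :
    dualObj h w d β E1 E2 = fun x =>
      clampPotential (gridVec h w d + ((-β) • lopCLM h w) x) + ⟪β • dualVec h w E1 E2, x⟫_ℝ := by
  ext x
  rw [gridVec_add_smul_lopCLM, real_inner_smul_left, PiLp.inner_apply, Fintype.sum_sum_type]
  simp only [dualObj, clampPotential, clampPrimitive, clampC, gridVec, Fintype.sum_prod_type,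
    ← sum_sub_distrib, mul_sum]
  simp [dualVec, pOf, qOf, mul_comm]

theorem dualGrad_eq (d : Fin h → Fin w → ℝ) (β : ℝ)
    (E1 : Fin (h - 1) → Fin w → ℝ) (E2 : Fin h → Fin (w - 1) → ℝ) :
    dualGrad h w d β E1 E2 = fun x => ((-β) • lopCLM h w).adjoint
      (clampVec (gridVec h w d + ((-β) • lopCLM h w) x)) + β • dualVec h w E1 E2 := by
  ext x : 1
  rw [gridVec_add_smul_lopCLM, adjoint_smul_lopCLM, smul_apply,
    clampVec_gridVec, ltCLM_gridVec]
  ext (k | k) <;> simp [dualGrad, dualVec]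

theorem dualObj_gradient_and_lipschitz
    (d : Fin h → Fin w → ℝ) (β : ℝ)
    (E1 : Fin (h - 1) → Fin w → ℝ) (E2 : Fin h → Fin (w - 1) → ℝ) :
    (∀ x : DualSpace h w,
        HasGradientAt (dualObj h w d β E1 E2) (dualGrad h w d β E1 E2 x) x) ∧
      ∀ x y : DualSpace h w,
        ‖dualGrad h w d β E1 E2 x - dualGrad h w d β E1 E2 y‖ ≤
          8 * β ^ 2 * ‖x - y‖ := by
  have hA : ‖(-β) • lopCLM h w‖ ^ 2 ≤ 8 * β ^ 2 := by
    rw [norm_smul, norm_neg, Real.norm_eq_abs, mul_pow, sq_abs, mul_comm]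
    gcongr
    exact norm_lopCLM_sq_le h w
  rw [dualObj_eq, dualGrad_eq]
  refine ⟨fun x => (hasGradientAt_clampPotential _).comp_affine_add_inner _ _ _ x,
    fun x y => ?_⟩
  refine (lipschitzWith_one_clampVec.norm_adjoint_comp_affine_sub_le _ _ _ x y).trans ?_
  rw [NNReal.coe_one, one_mul]
  gcongr

end
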